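/- arXiv:1509.05715 — 2 statements merged into one kernel-verified Lean document; each statement's English description precedes it below -/
import Mathlib

section
/- Suppose F_H : ℝ^{n_H} → ℝ is convex and differentiable with L_H-Lipschitz gradient, the coarse iterates satisfy F_H(x_{H,N}) < F_H(x_{H,1}) where x_{H,1} = x_{H,0} − (1/L_H)∇F_H(x_{H,0}), the restriction satisfies ∇F_H(Rx) = R∇F_μ(x) at x_{H,0} = Rx, the prolongation is P = Rᵀ, and ‖R∇F_μ(x)‖ > κ‖∇F_μ(x)‖ for some κ > 0. Then the coarse direction d(x) = Rᵀ(x_{H,N} − Rx) satisfies ⟨d(x), ∇F_μ(x)⟩ < −(κ²/(2L_H))‖∇F_μ(x)‖² ≤ 0; in particular d(x) is a descent direction for F_μ at x. -/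
/-!
Write `g = ∇F_H(Rx) = R∇F_μ(x)`. By the adjoint identity the pairing `⟪d(x), ∇F_μ(x)⟫` equals
`⟪x_{H,N} − Rx, g⟫`, which convexity bounds by `F_H(x_{H,N}) − F_H(Rx)`. This is smaller than
`F_H(x_{H,1}) − F_H(Rx)`, and the descent lemma for the gradient step `x_{H,1}` bounds that by
`−‖g‖²/(2L_H)`. Finally `‖g‖ > κ‖∇F_μ(x)‖`.
-/

open RealInnerProductSpace

variable {E : Type*} [NormedAddCommGroup E] [InnerProductSpace ℝ E] [CompleteSpace E]

theorem HasGradientAt.hasDerivAt_comp_add_smul {f : E → ℝ} {g x v : E} {t : ℝ}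
    (hf : HasGradientAt f g (x + t • v)) :
    HasDerivAt (fun s : ℝ => f (x + s • v)) ⟪g, v⟫ t := by
  have hline : HasDerivAt (fun s : ℝ => x + s • v) v t := by
    simpa using ((hasDerivAt_id t).smul_const v).const_add x
  simpa [InnerProductSpace.toDual_apply_apply, Function.comp_def] using
    hf.hasFDerivAt.comp_hasDerivAt t hline

theorem ConvexOn.add_inner_gradient_le {f : E → ℝ} {f' : E → E}
    (hconv : ConvexOn ℝ Set.univ f) (hf : ∀ y, HasGradientAt f (f' y) y) (x y : E) :
    f x + ⟪f' x, y - x⟫ ≤ f y := by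
  have hline : ConvexOn ℝ Set.univ (fun t : ℝ => f (x + t • (y - x))) := by
    simpa [Function.comp_def, AffineMap.lineMap_apply_module', add_comm] using
      hconv.comp_affineMap (AffineMap.lineMap x y)
  have hx : HasGradientAt f (f' x) (x + (0 : ℝ) • (y - x)) := by simpa using hf x
  have hslope := hline.le_slope_of_hasDerivAt (Set.mem_univ 0) (Set.mem_univ 1) zero_lt_one
    hx.hasDerivAt_comp_add_smul
  simp only [slope_def_field, one_smul, zero_smul, add_zero, add_sub_cancel, sub_zero,
    div_one] at hslope
  linarith

theorem le_add_inner_gradient_add_sq_of_lipschitz {f : E → ℝ} {f' : E → E} {L : ℝ}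
    (hf : ∀ y, HasGradientAt f (f' y) y) (hLip : ∀ y z, ‖f' y - f' z‖ ≤ L * ‖y - z‖)
    (x y : E) :
    f y ≤ f x + ⟪f' x, y - x⟫ + L / 2 * ‖y - x‖ ^ 2 := by
  set v := y - x
  let φ : ℝ → ℝ := fun t => f (x + t • v) - t * ⟪f' x, v⟫ - L / 2 * t ^ 2 * ‖v‖ ^ 2
  let φ' : ℝ → ℝ := fun t => ⟪f' (x + t • v), v⟫ - ⟪f' x, v⟫ - L * t * ‖v‖ ^ 2
  have hφ : ∀ t, HasDerivAt φ (φ' t) t := by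
    intro t
    have hlin : HasDerivAt (fun s : ℝ => s * ⟪f' x, v⟫) ⟪f' x, v⟫ t := by
      simpa using (hasDerivAt_id t).mul_const ⟪f' x, v⟫
    have hquad : HasDerivAt (fun s : ℝ => L / 2 * s ^ 2 * ‖v‖ ^ 2) (L * t * ‖v‖ ^ 2) t := by
      refine (((hasDerivAt_pow 2 t).const_mul (L / 2)).mul_const (‖v‖ ^ 2)).congr_deriv ?_
      push_cast
      ring
    exact (((hf (x + t • v)).hasDerivAt_comp_add_smul).fun_sub hlin).fun_sub hquad
  have hφ'_nonpos : ∀ t ∈ interior (Set.Ici (0 : ℝ)), φ' t ≤ 0 := by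
    intro t ht
    rw [interior_Ici, Set.mem_Ioi] at ht
    have hcs : ⟪f' (x + t • v) - f' x, v⟫ ≤ ‖f' (x + t • v) - f' x‖ * ‖v‖ :=
      real_inner_le_norm _ _
    have hlip : ‖f' (x + t • v) - f' x‖ ≤ L * (t * ‖v‖) := by
      simpa [norm_smul, abs_of_pos ht] using hLip (x + t • v) x
    have hlip_mul := mul_le_mul_of_nonneg_right hlip (norm_nonneg v)
    simp only [φ', inner_sub_left] at hcs ⊢
    nlinarith
  have hanti : AntitoneOn φ (Set.Ici 0) :=
    antitoneOn_of_hasDerivWithinAt_nonpos (convex_Ici 0)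
      (fun t _ => (hφ t).continuousAt.continuousWithinAt)
      (fun t _ => (hφ t).hasDerivWithinAt) hφ'_nonpos
  have hends : φ 1 ≤ φ 0 := hanti Set.self_mem_Ici (zero_le_one' ℝ) zero_le_one
  norm_num [φ, v] at hends
  linarith

theorem apply_sub_inv_smul_gradient_le {f : E → ℝ} {f' : E → E} {L : ℝ} (hL : 0 < L)
    (hf : ∀ y, HasGradientAt f (f' y) y) (hLip : ∀ y z, ‖f' y - f' z‖ ≤ L * ‖y - z‖) (x : E) :
    f (x - L⁻¹ • f' x) ≤ f x - ‖f' x‖ ^ 2 / (2 * L) := by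
  have h := le_add_inner_gradient_add_sq_of_lipschitz hf hLip x (x - L⁻¹ • f' x)
  rw [sub_sub_cancel_left, inner_neg_right, real_inner_smul_right, real_inner_self_eq_norm_sq,
    norm_neg, norm_smul, Real.norm_of_nonneg (inv_nonneg.2 hL.le)] at h
  calc f (x - L⁻¹ • f' x) ≤ f x + -(L⁻¹ * ‖f' x‖ ^ 2) + L / 2 * (L⁻¹ * ‖f' x‖) ^ 2 := h
    _ = f x - ‖f' x‖ ^ 2 / (2 * L) := by field_simp; ring

theorem inner_sub_gradient_lt_of_lt_gradient_step {f : E → ℝ} {f' : E → E} {L : ℝ} (hL : 0 < L)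
    (hconv : ConvexOn ℝ Set.univ f) (hf : ∀ y, HasGradientAt f (f' y) y)
    (hLip : ∀ y z, ‖f' y - f' z‖ ≤ L * ‖y - z‖) {x y : E} (hy : f y < f (x - L⁻¹ • f' x)) :
    ⟪y - x, f' x⟫ < -(‖f' x‖ ^ 2 / (2 * L)) := by
  have hconvex := hconv.add_inner_gradient_le hf x y
  have hstep := apply_sub_inv_smul_gradient_le hL hf hLip x
  rw [real_inner_comm]
  linarith

theorem coarse_direction_descent_general
    {n nH : ℕ}
    (Fμ' : EuclideanSpace ℝ (Fin n) → EuclideanSpace ℝ (Fin n))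
    (FH : EuclideanSpace ℝ (Fin nH) → ℝ)
    (FH' : EuclideanSpace ℝ (Fin nH) → EuclideanSpace ℝ (Fin nH))
    (LH : ℝ) (hLH : 0 < LH)
    (hFHconv : ConvexOn ℝ Set.univ FH)
    (hFH' : ∀ y, HasGradientAt FH (FH' y) y)
    (hFHLip : ∀ y z, ‖FH' y - FH' z‖ ≤ LH * ‖y - z‖)
    (R : EuclideanSpace ℝ (Fin n) →L[ℝ] EuclideanSpace ℝ (Fin nH))
    (x : EuclideanSpace ℝ (Fin n))
    (xH0 xH1 xHN : EuclideanSpace ℝ (Fin nH))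
    (hxH0 : xH0 = R x)
    (hxH1 : xH1 = xH0 - (1 / LH) • FH' xH0)
    (hmono : FH xHN < FH xH1)
    (hcoh : FH' (R x) = R (Fμ' x))
    (κ : ℝ) (hκ0 : 0 < κ)
    (hbig : ‖R (Fμ' x)‖ > κ * ‖Fμ' x‖) :
    ⟪(ContinuousLinearMap.adjoint R) (xHN - R x), Fμ' x⟫ <
        -(κ ^ 2 / (2 * LH)) * ‖Fμ' x‖ ^ 2 ∧
      -(κ ^ 2 / (2 * LH)) * ‖Fμ' x‖ ^ 2 ≤ 0 := by
  subst hxH0 hxH1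
  rw [one_div] at hmono
  have hpair : ⟪(ContinuousLinearMap.adjoint R) (xHN - R x), Fμ' x⟫ <
      -(‖R (Fμ' x)‖ ^ 2 / (2 * LH)) := by
    rw [ContinuousLinearMap.adjoint_inner_left, ← hcoh]
    exact inner_sub_gradient_lt_of_lt_gradient_step hLH hFHconv hFH' hFHLip hmono
  have hmargin : κ ^ 2 / (2 * LH) * ‖Fμ' x‖ ^ 2 < ‖R (Fμ' x)‖ ^ 2 / (2 * LH) := by
    rw [div_mul_eq_mul_div, ← mul_pow]
    gcongr
  have hnonneg : 0 ≤ κ ^ 2 / (2 * LH) * ‖Fμ' x‖ ^ 2 := by positivity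
  constructor <;> linarith

/-- The coarse direction `d(x) = Rᵀ(x_{H,N} − Rx)` is a descent direction for
the smoothed fine objective. -/
theorem coarse_direction_descent
    {n nH : ℕ}
    (Fμ : EuclideanSpace ℝ (Fin n) → ℝ)
    (Fμ' : EuclideanSpace ℝ (Fin n) → EuclideanSpace ℝ (Fin n))
    (hFμ' : ∀ y, HasGradientAt Fμ (Fμ' y) y)
    (FH : EuclideanSpace ℝ (Fin nH) → ℝ)
    (FH' : EuclideanSpace ℝ (Fin nH) → EuclideanSpace ℝ (Fin nH))
    (LH : ℝ) (hLH : 0 < LH)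
    (hFHconv : ConvexOn ℝ Set.univ FH)
    (hFH' : ∀ y, HasGradientAt FH (FH' y) y)
    (hFHLip : ∀ y z, ‖FH' y - FH' z‖ ≤ LH * ‖y - z‖)
    (R : EuclideanSpace ℝ (Fin n) →L[ℝ] EuclideanSpace ℝ (Fin nH))
    (x : EuclideanSpace ℝ (Fin n))
    (xH0 xH1 xHN : EuclideanSpace ℝ (Fin nH))
    (hxH0 : xH0 = R x)
    (hxH1 : xH1 = xH0 - (1 / LH) • FH' xH0)
    (hmono : FH xHN < FH xH1)
    (hcoh : FH' (R x) = R (Fμ' x))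
    (κ : ℝ) (hκ0 : 0 < κ) (hκ1 : κ < 1)
    (hbig : ‖R (Fμ' x)‖ > κ * ‖Fμ' x‖) :
    ⟪(ContinuousLinearMap.adjoint R) (xHN - R x), Fμ' x⟫ <
        -(κ ^ 2 / (2 * LH)) * ‖Fμ' x‖ ^ 2 ∧
      -(κ ^ 2 / (2 * LH)) * ‖Fμ' x‖ ^ 2 ≤ 0 :=
  coarse_direction_descent_general Fμ' FH FH' LH hLH hFHconv hFH' hFHLip R x xH0 xH1 xHN hxH0 hxH1
    hmono hcoh κ hκ0 hbig
end

section
/- Let f be convex with L_f-Lipschitz gradient, g convex, F = f+g, and F_μ = f + g_μ where g_μ is a μ-smooth approximation of g with parameters (α, β, K) (so g − β₁μ ≤ g_μ ≤ g + β₂μ and ∇F_μ is Lipschitz). Fix x and let x̃ = prox(x) w.r.t. L_f. Then Prog(x) ≤ (1/(2L_f))‖∇F_μ(x)‖² + βμ. -/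
/-!
Convexity of `g_μ` and the two smoothing bounds give
`g p - g x ≥ ⟪∇g_μ(x), p - x⟫ - βμ`, so the negated model value at `p` is at most
`-(L/2 ‖p - x‖² + ⟪∇F_μ(x), p - x⟫) + βμ`, and the quadratic `L/2 ‖d‖² + ⟪v, d⟫` is bounded
below by its minimum `-‖v‖²/(2L)`.
-/

open RealInnerProductSpace

theorem ConvexOn.add_fderiv_sub_le {E : Type*} [NormedAddCommGroup E] [NormedSpace ℝ E]
    {s : Set E} {f : E → ℝ} {f' : E →L[ℝ] ℝ} {x y : E}
    (hf : ConvexOn ℝ s f) (hx : x ∈ s) (hy : y ∈ s) (hf' : HasFDerivAt f f' x) :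
    f x + f' (y - x) ≤ f y := by
  let φ : ℝ → ℝ := f ∘ AffineMap.lineMap x y
  have hφ : ConvexOn ℝ (AffineMap.lineMap x y ⁻¹' s) φ := hf.comp_affineMap _
  have hφ' : HasDerivAt φ (f' (y - x)) 0 := by
    refine HasFDerivAt.comp_hasDerivAt (0 : ℝ) ?_ AffineMap.hasDerivAt_lineMap
    simpa using hf'
  have hslope := hφ.le_slope_of_hasDerivAt (by simpa using hx) (by simpa using hy) one_pos hφ'
  simp only [φ, slope_def_field, Function.comp_apply, AffineMap.lineMap_apply_zero,
    AffineMap.lineMap_apply_one, sub_zero, div_one] at hslope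
  linarith

theorem ConvexOn.add_inner_gradient_sub_le {E : Type*} [NormedAddCommGroup E]
    [InnerProductSpace ℝ E] [CompleteSpace E] {s : Set E} {f : E → ℝ} {v x y : E}
    (hf : ConvexOn ℝ s f) (hx : x ∈ s) (hy : y ∈ s) (hv : HasGradientAt f v x) :
    f x + ⟪v, y - x⟫ ≤ f y := by
  simpa using hf.add_fderiv_sub_le hx hy (hasGradientAt_iff_hasFDerivAt.mp hv)

theorem neg_norm_sq_div_le_half_mul_norm_sq_add_inner {E : Type*} [NormedAddCommGroup E]
    [InnerProductSpace ℝ E] {L : ℝ} (hL : 0 < L) (v d : E) :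
    -(1 / (2 * L) * ‖v‖ ^ 2) ≤ L / 2 * ‖d‖ ^ 2 + ⟪v, d⟫ := by
  have hsquare : L / 2 * ‖d‖ ^ 2 + ⟪v, d⟫ + 1 / (2 * L) * ‖v‖ ^ 2
      = 1 / (2 * L) * ‖L • d + v‖ ^ 2 := by
    rw [norm_add_sq_real, norm_smul, real_inner_smul_left, real_inner_comm,
      Real.norm_of_nonneg hL.le]
    field_simp
  have : 0 ≤ 1 / (2 * L) * ‖L • d + v‖ ^ 2 := by positivity
  linarith

theorem prog_le_smoothed_grad_bound_general
    {n : ℕ} (g gμ : EuclideanSpace ℝ (Fin n) → ℝ)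
    (f' gμ' : EuclideanSpace ℝ (Fin n) → EuclideanSpace ℝ (Fin n))
    (Lf : ℝ) (hLf : 0 < Lf)
    (μ β β₁ β₂ : ℝ) (hβ : β = β₁ + β₂)
    (hgμconv : ConvexOn ℝ Set.univ gμ)
    (hgμ' : ∀ y, HasGradientAt gμ (gμ' y) y)
    (hlow : ∀ y, g y - β₁ * μ ≤ gμ y)
    (hhigh : ∀ y, gμ y ≤ g y + β₂ * μ)
    (x p : EuclideanSpace ℝ (Fin n)) :
    -(Lf / 2 * ‖p - x‖ ^ 2 + ⟪f' x, p - x⟫ + g p - g x) ≤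
      1 / (2 * Lf) * ‖f' x + gμ' x‖ ^ 2 + β * μ := by
  have hsmooth : ⟪gμ' x, p - x⟫ - β * μ ≤ g p - g x := by
    have := hgμconv.add_inner_gradient_sub_le (Set.mem_univ x) (Set.mem_univ p) (hgμ' x)
    rw [hβ]
    linarith [hlow x, hhigh p]
  have hquad := neg_norm_sq_div_le_half_mul_norm_sq_add_inner hLf (f' x + gμ' x) (p - x)
  rw [inner_add_left] at hquad
  linarith

/-- `Prog(x) ≤ (1/(2L_f))‖∇F_μ(x)‖² + βμ`. -/
theorem prog_le_smoothed_grad_bound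
    {n : ℕ} (f g gμ : EuclideanSpace ℝ (Fin n) → ℝ)
    (f' gμ' : EuclideanSpace ℝ (Fin n) → EuclideanSpace ℝ (Fin n))
    (Lf : ℝ) (hLf : 0 < Lf)
    (hf : ConvexOn ℝ Set.univ f)
    (hf' : ∀ x, HasGradientAt f (f' x) x)
    (hLip : ∀ x y, ‖f' x - f' y‖ ≤ Lf * ‖x - y‖)
    (hg : ConvexOn ℝ Set.univ g)
    (μ β β₁ β₂ : ℝ) (hμ : 0 < μ) (hβ₁ : 0 ≤ β₁) (hβ₂ : 0 ≤ β₂) (hβ : β = β₁ + β₂)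
    (hgμconv : ConvexOn ℝ Set.univ gμ)
    (hgμ' : ∀ y, HasGradientAt gμ (gμ' y) y)
    (hlow : ∀ y, g y - β₁ * μ ≤ gμ y)
    (hhigh : ∀ y, gμ y ≤ g y + β₂ * μ)
    (x p : EuclideanSpace ℝ (Fin n))
    (hp : IsMinOn (fun y => Lf / 2 * ‖y - x‖ ^ 2 + ⟪f' x, y - x⟫ + g y) Set.univ p) :
    -(Lf / 2 * ‖p - x‖ ^ 2 + ⟪f' x, p - x⟫ + g p - g x) ≤
      1 / (2 * Lf) * ‖f' x + gμ' x‖ ^ 2 + β * μ :=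
  prog_le_smoothed_grad_bound_general g gμ f' gμ' Lf hLf μ β β₁ β₂ hβ hgμconv hgμ' hlow hhigh x p
end
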